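/- Let C = γγᵀ + Λ with Λ diagonal, entries in (0, c₅], and let 𝔢₁,...,𝔢_N be an orthonormal eigenbasis of C with γᵀ𝔢₁ ≥ 0. If ‖γ‖² ≥ 2c₅, then for every i ≥ 2, |γᵀ𝔢ᵢ| ≤ ‖γ‖ · ‖γ/‖γ‖ − 𝔢₁‖ ≤ √(2c₅). -/

import Mathlib

/-!
Expanding `γ = ∑ⱼ (γᵀ𝔢ⱼ) 𝔢ⱼ` in the eigenbasis, `‖γ‖⁴ ≤ γᵀCγ ≤ λ₁ ‖γ‖²`, while
`λ₁ = 𝔢₁ᵀC𝔢₁ = (γᵀ𝔢₁)² + 𝔢₁ᵀΛ𝔢₁ ≤ (γᵀ𝔢₁)² + c₅`. Hence `(γᵀ𝔢₁)² ≥ ‖γ‖² - c₅`, and as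
`γᵀ𝔢₁ ≥ 0` this gives `‖γ‖² ‖γ/‖γ‖ - 𝔢₁‖² = 2 (‖γ‖² - ‖γ‖ γᵀ𝔢₁) ≤ 2 c₅`.
For `i ≥ 2`, orthogonality gives `γᵀ𝔢ᵢ = ‖γ‖ (γ/‖γ‖ - 𝔢₁)ᵀ𝔢ᵢ`, and Cauchy–Schwarz finishes.
-/

open Matrix Finset

theorem dotProduct_self_eq_sum_sq {n : Type*} [Fintype n] (v : n → ℝ) :
    v ⬝ᵥ v = ∑ k, v k ^ 2 := by
  simp only [dotProduct, sq]

section OrthonormalEigenbasis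

variable {n : Type*} [Fintype n] [DecidableEq n] {e : n → n → ℝ}

theorem sum_dotProduct_smul_eq_self
    (horth : ∀ i j, e i ⬝ᵥ e j = if i = j then (1 : ℝ) else 0) (v : n → ℝ) :
    ∑ j, (e j ⬝ᵥ v) • e j = v := by
  -- A square matrix with `E Eᵀ = 1` also has `Eᵀ E = 1`: the rows are complete.
  have hEEt : of e * (of e)ᵀ = 1 := by
    ext i j
    simpa [mul_apply, one_apply, dotProduct] using horth i j
  calc ∑ j, (e j ⬝ᵥ v) • e j = (v ᵥ* (of e)ᵀ) ᵥ* of e := by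
        rw [vecMul_transpose, vecMul_eq_sum]; rfl
    _ = v := by rw [vecMul_vecMul, mul_eq_one_comm.mp hEEt, vecMul_one]

theorem dotProduct_mulVec_eq_sum_eigenvalue_mul_sq
    (horth : ∀ i j, e i ⬝ᵥ e j = if i = j then (1 : ℝ) else 0)
    {A : Matrix n n ℝ} {lam : n → ℝ} (heig : ∀ i, A *ᵥ e i = lam i • e i) (v : n → ℝ) :
    v ⬝ᵥ (A *ᵥ v) = ∑ j, lam j * (e j ⬝ᵥ v) ^ 2 := by
  nth_rw 2 [← sum_dotProduct_smul_eq_self horth v]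
  simp only [mulVec_sum, mulVec_smul, heig, smul_smul, dotProduct_sum, dotProduct_smul,
    smul_eq_mul]
  exact sum_congr rfl fun j _ => by rw [dotProduct_comm]; ring

theorem sum_sq_dotProduct_eq_dotProduct_self
    (horth : ∀ i j, e i ⬝ᵥ e j = if i = j then (1 : ℝ) else 0) (v : n → ℝ) :
    ∑ j, (e j ⬝ᵥ v) ^ 2 = v ⬝ᵥ v := by
  simpa using (dotProduct_mulVec_eq_sum_eigenvalue_mul_sq horth (A := 1) (lam := 1)
    (fun i => by simp) v).symm

theorem dotProduct_mulVec_le_of_eigenvalue_le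
    (horth : ∀ i j, e i ⬝ᵥ e j = if i = j then (1 : ℝ) else 0)
    {A : Matrix n n ℝ} {lam : n → ℝ} (heig : ∀ i, A *ᵥ e i = lam i • e i)
    {μ : ℝ} (hμ : ∀ j, lam j ≤ μ) (v : n → ℝ) :
    v ⬝ᵥ (A *ᵥ v) ≤ μ * (v ⬝ᵥ v) := by
  rw [dotProduct_mulVec_eq_sum_eigenvalue_mul_sq horth heig,
    ← sum_sq_dotProduct_eq_dotProduct_self horth, mul_sum]
  exact sum_le_sum fun j _ => mul_le_mul_of_nonneg_right (hμ j) (sq_nonneg _)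

end OrthonormalEigenbasis

section RankOneAddDiagonal

variable {n : Type*} [Fintype n] [DecidableEq n] {γ σ : n → ℝ} {e : n → n → ℝ} {lam : n → ℝ}

theorem dotProduct_mulVec_vecMulVec_add_diagonal (γ σ v : n → ℝ) :
    v ⬝ᵥ ((vecMulVec γ γ + diagonal σ) *ᵥ v) = (γ ⬝ᵥ v) ^ 2 + ∑ k, σ k * v k ^ 2 := by
  simp only [add_mulVec, dotProduct_add, vecMulVec_mulVec, op_smul_eq_smul, dotProduct_smul,
    smul_eq_mul, dotProduct_comm v γ, sq]
  simp only [dotProduct, mulVec_diagonal]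
  exact congrArg _ (sum_congr rfl fun k _ => by ring)

theorem eigenvalue_eq_sq_dotProduct_add_sum
    (horth : ∀ i j, e i ⬝ᵥ e j = if i = j then (1 : ℝ) else 0)
    (heig : ∀ i, (vecMulVec γ γ + diagonal σ) *ᵥ e i = lam i • e i) (i : n) :
    lam i = (γ ⬝ᵥ e i) ^ 2 + ∑ k, σ k * e i k ^ 2 := by
  have := dotProduct_mulVec_vecMulVec_add_diagonal γ σ (e i)
  rwa [heig, dotProduct_smul, horth, if_pos rfl, smul_eq_mul, mul_one] at this

theorem sum_sq_le_eigenvalue_of_forall_le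
    (horth : ∀ i j, e i ⬝ᵥ e j = if i = j then (1 : ℝ) else 0)
    (heig : ∀ i, (vecMulVec γ γ + diagonal σ) *ᵥ e i = lam i • e i)
    (hσ : ∀ k, 0 ≤ σ k) {i : n} (hmax : ∀ j, lam j ≤ lam i) :
    ∑ k, γ k ^ 2 ≤ lam i := by
  have hσ_quad (v : n → ℝ) : 0 ≤ ∑ k, σ k * v k ^ 2 :=
    sum_nonneg fun k _ => mul_nonneg (hσ k) (sq_nonneg _)
  have hray := dotProduct_mulVec_le_of_eigenvalue_le horth heig hmax γ
  rw [dotProduct_mulVec_vecMulVec_add_diagonal, dotProduct_self_eq_sum_sq] at hray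
  have hlam : 0 ≤ lam i := by
    rw [eigenvalue_eq_sq_dotProduct_add_sum horth heig]
    exact add_nonneg (sq_nonneg _) (hσ_quad _)
  nlinarith [hσ_quad γ]

theorem sum_sq_sub_le_sq_dotProduct
    (horth : ∀ i j, e i ⬝ᵥ e j = if i = j then (1 : ℝ) else 0)
    (heig : ∀ i, (vecMulVec γ γ + diagonal σ) *ᵥ e i = lam i • e i)
    {c : ℝ} (hσ : ∀ k, 0 ≤ σ k ∧ σ k ≤ c) {i : n} (hmax : ∀ j, lam j ≤ lam i) :
    ∑ k, γ k ^ 2 - c ≤ (γ ⬝ᵥ e i) ^ 2 := by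
  have hΛ : ∑ k, σ k * e i k ^ 2 ≤ c :=
    calc ∑ k, σ k * e i k ^ 2 ≤ ∑ k, c * e i k ^ 2 :=
          sum_le_sum fun k _ => mul_le_mul_of_nonneg_right (hσ k).2 (sq_nonneg _)
      _ = c := by rw [← mul_sum, ← dotProduct_self_eq_sum_sq, horth, if_pos rfl, mul_one]
  have hG := sum_sq_le_eigenvalue_of_forall_le horth heig (fun k => (hσ k).1) hmax
  rw [eigenvalue_eq_sq_dotProduct_add_sum horth heig] at hG
  linarith

end RankOneAddDiagonal

section UnitVector

variable {n : Type*} [Fintype n]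

theorem abs_dotProduct_le_sqrt_sum_sq_sub {u w e : n → ℝ} (hw : w ⬝ᵥ e = 0)
    (he : e ⬝ᵥ e = 1) : |u ⬝ᵥ e| ≤ √(∑ k, (u k - w k) ^ 2) := by
  have hue : u ⬝ᵥ e = (u - w) ⬝ᵥ e := by rw [sub_dotProduct, hw, sub_zero]
  have hcs := sum_mul_sq_le_sq_mul_sq univ (u - w) e
  rw [← dotProduct_self_eq_sum_sq e, he, mul_one] at hcs
  exact Real.abs_le_sqrt (hue ▸ hcs)

theorem sum_sq_mul_sum_sq_div_sqrt_sub {u e : n → ℝ} (hu : 0 < ∑ k, u k ^ 2)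
    (he : e ⬝ᵥ e = 1) :
    (∑ k, u k ^ 2) * ∑ k, (u k / √(∑ j, u j ^ 2) - e k) ^ 2
      = 2 * (∑ k, u k ^ 2 - √(∑ k, u k ^ 2) * (u ⬝ᵥ e)) := by
  set r := √(∑ j, u j ^ 2)
  have hr : r ≠ 0 := (Real.sqrt_pos.mpr hu).ne'
  have hr2 : ∑ k, u k ^ 2 = r ^ 2 := (Real.sq_sqrt hu.le).symm
  have hexpand (k : n) :
      (u k / r - e k) ^ 2 = u k ^ 2 / r ^ 2 - 2 / r * (u k * e k) + e k ^ 2 := by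
    field_simp
    ring
  rw [sum_congr rfl fun k _ => hexpand k, sum_add_distrib, sum_sub_distrib, ← sum_div,
    ← mul_sum, ← dotProduct_self_eq_sum_sq e, he, hr2]
  simp only [dotProduct]
  field_simp
  ring

theorem sub_le_sqrt_mul_of_sub_le_sq {G c t : ℝ} (hc : 0 ≤ c) (ht : 0 ≤ t)
    (h : G - c ≤ t ^ 2) : G - c ≤ √G * t := by
  rcases le_or_gt (G - c) 0 with hneg | hpos
  · exact hneg.trans (mul_nonneg (Real.sqrt_nonneg G) ht)
  calc G - c = √(G - c) * √(G - c) := (Real.mul_self_sqrt hpos.le).symm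
    _ ≤ √G * t := mul_le_mul (Real.sqrt_le_sqrt (by linarith)) (Real.sqrt_le_iff.mpr ⟨ht, h⟩)
        (Real.sqrt_nonneg _) (Real.sqrt_nonneg _)

end UnitVector

theorem inner_gamma_lower_eigenvectors_bounded_general
    (N : ℕ) (γ : Fin N → ℝ) (σ : Fin N → ℝ) (c₅ : ℝ)
    (hσ : ∀ i, 0 < σ i ∧ σ i ≤ c₅)
    (hγ : γ ≠ 0)
    (C : Matrix (Fin N) (Fin N) ℝ)
    (hC : C = Matrix.of (fun i j => γ i * γ j + if i = j then σ i else 0))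
    (e : Fin N → Fin N → ℝ) (lam : Fin N → ℝ)
    (horth : ∀ i j, (e i) ⬝ᵥ (e j) = if i = j then (1 : ℝ) else 0)
    (heig : ∀ i, C *ᵥ e i = lam i • e i)
    (hdec : Antitone lam)
    (hsign : ∀ h0 : 0 < N, 0 ≤ γ ⬝ᵥ e ⟨0, h0⟩) :
    ∀ h0 : 0 < N, ∀ i : Fin N, i ≠ ⟨0, h0⟩ →
      |γ ⬝ᵥ e i| ≤ Real.sqrt (∑ j, γ j ^ 2) *
          Real.sqrt (∑ k, (γ k / Real.sqrt (∑ j, γ j ^ 2) - e ⟨0, h0⟩ k) ^ 2) ∧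
      Real.sqrt (∑ j, γ j ^ 2) *
          Real.sqrt (∑ k, (γ k / Real.sqrt (∑ j, γ j ^ 2) - e ⟨0, h0⟩ k) ^ 2)
        ≤ Real.sqrt (2 * c₅) := by
  intro h0 i hi
  have hG : 0 < ∑ j, γ j ^ 2 := by
    obtain ⟨j, hj⟩ := Function.ne_iff.mp hγ
    exact sum_pos' (fun k _ => sq_nonneg (γ k)) ⟨j, mem_univ j, sq_pos_of_ne_zero hj⟩
  have hc₅ : 0 ≤ c₅ := ((hσ i).1.trans_le (hσ i).2).le
  have hC' : C = vecMulVec γ γ + diagonal σ := by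
    ext; simp [hC, vecMulVec_apply, diagonal_apply]
  rw [hC'] at heig
  have hsq := sum_sq_sub_le_sq_dotProduct horth heig (fun k => ⟨(hσ k).1.le, (hσ k).2⟩)
    (i := ⟨0, h0⟩) fun j => hdec (Fin.mk_le_of_le_val j.val.zero_le)
  refine ⟨?_, ?_⟩
  · have hscale : γ ⬝ᵥ e i = √(∑ j, γ j ^ 2) * ((fun k => γ k / √(∑ j, γ j ^ 2)) ⬝ᵥ e i) := by
      rw [← smul_eq_mul, ← smul_dotProduct]
      congr 1
      ext k
      simp [mul_div_cancel₀ _ (Real.sqrt_pos.mpr hG).ne']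
    rw [hscale, abs_mul, abs_of_nonneg (Real.sqrt_nonneg _)]
    gcongr
    exact abs_dotProduct_le_sqrt_sum_sq_sub (by rw [horth, if_neg (Ne.symm hi)])
      (by rw [horth, if_pos rfl])
  · rw [← Real.sqrt_mul hG.le, sum_sq_mul_sum_sq_div_sqrt_sub hG (by rw [horth, if_pos rfl])]
    gcongr
    linarith [sub_le_sqrt_mul_of_sub_le_sq hc₅ (hsign h0) hsq]

/-- For `C = γγᵀ + Λ` with `Λ` diagonal, entries in `(0, c₅]`, and an
orthonormal eigenbasis `𝔢₁,...,𝔢_N` of `C` ordered by decreasing eigenvalues with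
`γᵀ𝔢₁ ≥ 0`: if `‖γ‖² ≥ 2c₅` then for all `i ≥ 2`,
`|γᵀ𝔢ᵢ| ≤ ‖γ‖·‖γ/‖γ‖ − 𝔢₁‖ ≤ √(2c₅)`. -/
theorem inner_gamma_lower_eigenvectors_bounded
    (N : ℕ) (γ : Fin N → ℝ) (σ : Fin N → ℝ) (c₅ : ℝ)
    (hσ : ∀ i, 0 < σ i ∧ σ i ≤ c₅)
    (hγ : γ ≠ 0)
    (C : Matrix (Fin N) (Fin N) ℝ)
    (hC : C = Matrix.of (fun i j => γ i * γ j + if i = j then σ i else 0))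
    (e : Fin N → Fin N → ℝ) (lam : Fin N → ℝ)
    (horth : ∀ i j, (e i) ⬝ᵥ (e j) = if i = j then (1 : ℝ) else 0)
    (heig : ∀ i, C *ᵥ e i = lam i • e i)
    (hdec : Antitone lam)
    (hsign : ∀ h0 : 0 < N, 0 ≤ γ ⬝ᵥ e ⟨0, h0⟩)
    (hbig : 2 * c₅ ≤ ∑ j, γ j ^ 2) :
    ∀ h0 : 0 < N, ∀ i : Fin N, i ≠ ⟨0, h0⟩ →
      |γ ⬝ᵥ e i| ≤ Real.sqrt (∑ j, γ j ^ 2) *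
          Real.sqrt (∑ k, (γ k / Real.sqrt (∑ j, γ j ^ 2) - e ⟨0, h0⟩ k) ^ 2) ∧
      Real.sqrt (∑ j, γ j ^ 2) *
          Real.sqrt (∑ k, (γ k / Real.sqrt (∑ j, γ j ^ 2) - e ⟨0, h0⟩ k) ^ 2)
        ≤ Real.sqrt (2 * c₅) :=
  inner_gamma_lower_eigenvectors_bounded_general N γ σ c₅ hσ hγ C hC e lam horth heig hdec hsign
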